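/- arXiv:2511.12943 — 2 statements merged into one kernel-verified Lean document; each statement's English description precedes it below -/
import Mathlib

section
/- If G is a (p+1)K_2-saturated graph on n vertices (i.e., G has no matching of size p+1, but adding any missing edge creates one) and G is disconnected, then every connected component of G is a complete graph on an odd number of vertices. -/
open SimpleGraph

/-- `G` contains a matching of size `s`. -/
def HasMatchingOfSize {V : Type*} (G : SimpleGraph V) (s : ℕ) : Prop :=
  ∃ M : G.Subgraph, M.IsMatching ∧ M.verts.ncard = 2 * s

/-- `G` is `q·K₂`-saturated: it has no matching of size `q`, but adding any
missing edge creates one. -/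
def MatchingSaturated {V : Type*} (G : SimpleGraph V) (q : ℕ) : Prop :=
  ¬ HasMatchingOfSize G q ∧
    ∀ u v : V, u ≠ v → ¬ G.Adj u v →
      HasMatchingOfSize (G ⊔ fromEdgeSet {s(u, v)}) q

namespace MatchSatAux

variable {V : Type*}

/-- matching as involution -/
def InvM (G : SimpleGraph V) (f : V → V) : Prop :=
  (∀ v, f (f v) = v) ∧ ∀ v, f v ≠ v → G.Adj v (f v)

def msupp (f : V → V) : Set V := {v | f v ≠ v}

lemma mem_msupp {f : V → V} {v : V} : v ∈ msupp f ↔ f v ≠ v := Iff.rfl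

/-- involution matching to subgraph -/
def invToSub (G : SimpleGraph V) (f : V → V) (h : InvM G f) : G.Subgraph where
  verts := msupp f
  Adj a b := a ≠ b ∧ f a = b
  adj_sub := by
    rintro a b ⟨hne, rfl⟩
    exact h.2 a (Ne.symm hne)
  edge_vert := by
    rintro a b ⟨hne, rfl⟩
    exact Ne.symm hne
  symm := by
    constructor; rintro a b ⟨hne, rfl⟩
    exact ⟨Ne.symm hne, by rw [h.1]⟩

lemma invToSub_isMatching (G : SimpleGraph V) (f : V → V) (h : InvM G f) :
    (invToSub G f h).IsMatching := by
  intro v hv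
  refine ⟨f v, ⟨Ne.symm hv, rfl⟩, ?_⟩
  rintro y ⟨-, rfl⟩
  rfl

lemma hasM_iff (G : SimpleGraph V) (s : ℕ) :
    HasMatchingOfSize G s ↔ ∃ f, InvM G f ∧ (msupp f).ncard = 2 * s := by
  constructor
  · rintro ⟨M, hM, hcard⟩
    classical
    set f : V → V := fun v => if h : v ∈ M.verts then (hM h).choose else v with hfdef
    have hadj : ∀ v, ∀ h : v ∈ M.verts, M.Adj v (f v) := by
      intro v h
      simp only [hfdef, dif_pos h]
      exact (hM h).choose_spec.1
    have hout : ∀ v, v ∉ M.verts → f v = v := by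
      intro v h; simp only [hfdef, dif_neg h]
    have huniq : ∀ v, ∀ _ : v ∈ M.verts, ∀ w, M.Adj v w → f v = w := by
      intro v h w hw
      simp only [hfdef, dif_pos h]
      exact ((hM h).choose_spec.2 w hw).symm
    have hsupp : msupp f = M.verts := by
      ext v
      constructor
      · intro hv
        by_contra hc
        exact hv (hout v hc)
      · intro hv
        exact (M.adj_sub (hadj v hv)).ne'
    refine ⟨f, ⟨?_, ?_⟩, ?_⟩
    · intro v
      by_cases h : v ∈ M.verts
      · have h1 := hadj v h
        have hw : f v ∈ M.verts := M.edge_vert h1.symm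
        exact huniq (f v) hw v h1.symm
      · rw [hout v h, hout v h]
    · intro v hv
      by_cases h : v ∈ M.verts
      · exact M.adj_sub (hadj v h)
      · exact absurd (hout v h) hv
    · rw [hsupp]; exact hcard
  · rintro ⟨f, hf, hcard⟩
    exact ⟨invToSub G f hf, invToSub_isMatching G f hf, hcard⟩


variable {G : SimpleGraph V} {p : ℕ}

lemma no_adj_exposed [Fintype V] (hno : ¬ HasMatchingOfSize G (p+1)) {f : V → V}
    (hf : InvM G f) (hcard : (msupp f).ncard = 2*p) {u v : V}
    (hu : f u = u) (hv : f v = v) (hne : u ≠ v) : ¬ G.Adj u v := by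
  classical
  intro hadj
  apply hno
  rw [hasM_iff]
  set f' : V → V := fun w => if w = u then v else if w = v then u else f w with hf'def
  have hvals : f' u = v ∧ f' v = u ∧ ∀ w, w ≠ u → w ≠ v → f' w = f w := by
    refine ⟨by simp [hf'def], by simp [hf'def, hne.symm], fun w h1 h2 => by
      simp [hf'def, h1, h2]⟩
  have hfix : ∀ w, w ≠ u → w ≠ v → f w ≠ u ∧ f w ≠ v := by
    intro w h1 h2
    constructor
    · intro hc
      exact h1 (by rw [← hf.1 w, hc, hu])
    · intro hc
      exact h2 (by rw [← hf.1 w, hc, hv])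
  have hsupp : msupp f' = insert u (insert v (msupp f)) := by
    ext w
    simp only [mem_msupp, Set.mem_insert_iff]
    by_cases h1 : w = u
    · subst h1; simp [hvals.1, hne.symm]
    by_cases h2 : w = v
    · subst h2; simp [hvals.2.1, hne]
    rw [hvals.2.2 w h1 h2]
    simp [h1, h2]
  refine ⟨f', ⟨?_, ?_⟩, ?_⟩
  · intro w
    by_cases h1 : w = u
    · subst h1; rw [hvals.1, hvals.2.1]
    by_cases h2 : w = v
    · subst h2; rw [hvals.2.1, hvals.1]
    rw [hvals.2.2 w h1 h2, hvals.2.2 _ (hfix w h1 h2).1 (hfix w h1 h2).2]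
    exact hf.1 w
  · intro w hw
    by_cases h1 : w = u
    · subst h1; rw [hvals.1]; exact hadj
    by_cases h2 : w = v
    · subst h2; rw [hvals.2.1]; exact hadj.symm
    rw [hvals.2.2 w h1 h2] at hw ⊢
    exact hf.2 w hw
  · rw [hsupp]
    have h1 : v ∉ msupp f := by simp [mem_msupp, hv]
    have h2 : u ∉ insert v (msupp f) := by simp [mem_msupp, hu, hne]
    rw [Set.ncard_insert_of_notMem h2, Set.ncard_insert_of_notMem h1, hcard]
    ring

lemma exists_exposed_pair [Fintype V] (hsat : MatchingSaturated G (p+1)) {u v : V}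
    (hne : u ≠ v) (hnadj : ¬ G.Adj u v) :
    ∃ f, InvM G f ∧ (msupp f).ncard = 2*p ∧ f u = u ∧ f v = v := by
  classical
  obtain ⟨f', hf', hcard'⟩ := (hasM_iff _ _).mp (hsat.2 u v hne hnadj)
  have hsupadj : ∀ a b : V, (G ⊔ fromEdgeSet {s(u,v)}).Adj a b ↔
      G.Adj a b ∨ ((a = u ∧ b = v) ∨ (a = v ∧ b = u)) := by
    intro a b
    simp only [sup_adj, fromEdgeSet_adj, Set.mem_singleton_iff, Sym2.eq_iff]
    constructor
    · rintro (h | ⟨(⟨rfl, rfl⟩|⟨rfl, rfl⟩), hab⟩)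
      · exact Or.inl h
      · exact Or.inr (Or.inl ⟨rfl, rfl⟩)
      · exact Or.inr (Or.inr ⟨rfl, rfl⟩)
    · rintro (h | (⟨rfl, rfl⟩|⟨rfl, rfl⟩))
      · exact Or.inl h
      · exact Or.inr ⟨Or.inl ⟨rfl, rfl⟩, hne⟩
      · exact Or.inr ⟨Or.inr ⟨rfl, rfl⟩, hne.symm⟩
  by_cases hcase : f' u = v
  · have hvu : f' v = u := by rw [← hcase, hf'.1]
    set f : V → V := fun w => if w = u ∨ w = v then w else f' w with hfdef
    have hfu : f u = u := by simp [hfdef]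
    have hfv : f v = v := by simp [hfdef]
    have hfo : ∀ w, w ≠ u → w ≠ v → f w = f' w := by
      intro w h1 h2; simp [hfdef, h1, h2]
    have hfix : ∀ w, w ≠ u → w ≠ v → f' w ≠ u ∧ f' w ≠ v := by
      intro w h1 h2
      constructor
      · intro hc
        exact h2 (by rw [← hcase, ← hc, hf'.1])
      · intro hc
        exact h1 (by rw [← hvu, ← hc, hf'.1])
    refine ⟨f, ⟨?_, ?_⟩, ?_, hfu, hfv⟩
    · intro w
      by_cases h1 : w = u
      · subst h1; rw [hfu, hfu]
      by_cases h2 : w = v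
      · subst h2; rw [hfv, hfv]
      rw [hfo w h1 h2, hfo _ (hfix w h1 h2).1 (hfix w h1 h2).2]
      exact hf'.1 w
    · intro w hw
      by_cases h1 : w = u
      · subst h1; rw [hfu] at hw; exact absurd rfl hw
      by_cases h2 : w = v
      · subst h2; rw [hfv] at hw; exact absurd rfl hw
      rw [hfo w h1 h2] at hw ⊢
      rcases (hsupadj w (f' w)).mp (hf'.2 w hw) with h | (⟨rfl, -⟩|⟨rfl, -⟩)
      · exact h
      · exact absurd rfl h1
      · exact absurd rfl h2
    · have hsupp : msupp f = msupp f' \ {u, v} := by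
        ext w
        simp only [mem_msupp, Set.mem_diff, Set.mem_insert_iff, Set.mem_singleton_iff]
        by_cases h1 : w = u
        · subst h1; simp [hfu]
        by_cases h2 : w = v
        · subst h2; simp [hfv]
        rw [hfo w h1 h2]
        simp [h1, h2]
      have hsub : {u, v} ⊆ msupp f' := by
        intro w hw
        rcases hw with rfl | hw
        · rw [mem_msupp, hcase]; exact fun hc => hne hc.symm
        · rw [Set.mem_singleton_iff] at hw; subst hw
          rw [mem_msupp, hvu]; exact hne
      rw [hsupp, Set.ncard_diff hsub, Set.ncard_pair hne, hcard']
      omega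
  · exfalso
    apply hsat.1
    rw [hasM_iff]
    refine ⟨f', ⟨hf'.1, ?_⟩, hcard'⟩
    intro w hw
    rcases (hsupadj w (f' w)).mp (hf'.2 w hw) with h | (⟨rfl, h2⟩|⟨rfl, h2⟩)
    · exact h
    · exact absurd h2 hcase
    · exfalso; apply hcase; rw [← h2, hf'.1]


/-- alternating sequence: apply g, then f, then g, ... -/
def alt (f g : V → V) (u : V) : ℕ → V
  | 0 => u
  | (k+1) => if Even k then g (alt f g u k) else f (alt f g u k)

variable {f g : V → V} {u : V}

lemma alt_zero : alt f g u 0 = u := rfl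

lemma alt_succ_even (k : ℕ) (h : Even k) : alt f g u (k+1) = g (alt f g u k) := by
  simp [alt, h]

lemma alt_succ_odd (k : ℕ) (h : ¬ Even k) : alt f g u (k+1) = f (alt f g u k) := by
  simp [alt, h]

lemma alt_pred_even (hg : ∀ v, g (g v) = v) (k : ℕ) (h : Even k) :
    g (alt f g u (k+1)) = alt f g u k := by
  rw [alt_succ_even k h, hg]

lemma alt_pred_odd (hf : ∀ v, f (f v) = v) (k : ℕ) (h : ¬ Even k) :
    f (alt f g u (k+1)) = alt f g u k := by
  rw [alt_succ_odd k h, hf]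

lemma alt_inj_aux (hf : ∀ v, f (f v) = v) (hg : ∀ v, g (g v) = v) (hfu : f u = u)
    {K : ℕ} (hns : ∀ k, k < K → alt f g u (k+1) ≠ alt f g u k) :
    ∀ j i, i < j → j ≤ K → alt f g u i = alt f g u j → False := by
  intro j
  induction j using Nat.strong_induction_on with
  | _ j IH =>
  intro i hij hjK heq
  obtain ⟨j', rfl⟩ : ∃ j', j = j' + 1 := ⟨j - 1, by omega⟩
  rcases Nat.eq_zero_or_pos i with rfl | hi
  · rw [alt_zero] at heq
    by_cases hej : Even j'
    · have h1 : alt f g u j' = g u := by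
        rw [← alt_pred_even hg j' hej, ← heq]
      rcases Nat.eq_zero_or_pos j' with rfl | hj'
    
      · exact hns 0 (by omega) heq.symm
      · have h2 : alt f g u 1 = alt f g u j' := by
          rw [h1, alt_succ_even 0 (Even.zero), alt_zero]
        have hj2 : 2 ≤ j' := by
          obtain ⟨a, ha⟩ := hej; omega
        exact IH j' (by omega) 1 (by omega) (by omega) h2
    · have h1 : alt f g u j' = u := by
        rw [← alt_pred_odd hf j' hej, ← heq, hfu]
      exact hns j' (by omega) (by rw [← heq, h1])
  · obtain ⟨i', rfl⟩ : ∃ i', i = i' + 1 := ⟨i - 1, by omega⟩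
    have hij' : i' < j' := by omega
    by_cases hei : Even i' <;> by_cases hej : Even j'
    · have h1 : alt f g u i' = alt f g u j' := by
        rw [← alt_pred_even hg i' hei, ← alt_pred_even hg j' hej, heq]
      exact IH j' (by omega) i' hij' (by omega) h1
    · -- i' even, j' odd
      have h1 : alt f g u (i'+1+1) = alt f g u j' := by
        rw [alt_succ_odd (i'+1) (by simp [Nat.even_add_one, hei]),
          ← alt_pred_odd hf j' hej, heq]
      obtain ⟨a, ha⟩ := hei
      obtain ⟨b, hb⟩ := Nat.not_even_iff_odd.mp hej
      rcases lt_trichotomy (i'+2) j' with h | h | h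
      · exact IH j' (by omega) (i'+2) h (by omega) h1
      · omega
      · have hjj : j' = i' + 1 := by omega
        subst hjj
        exact hns (i'+1) (by omega) heq.symm
    · -- i' odd, j' even
      have h1 : alt f g u (i'+1+1) = alt f g u j' := by
        rw [alt_succ_even (i'+1) (by simp [Nat.even_add_one, hei]),
          ← alt_pred_even hg j' hej, heq]
      obtain ⟨a, ha⟩ := Nat.not_even_iff_odd.mp hei
      obtain ⟨b, hb⟩ := hej
      rcases lt_trichotomy (i'+2) j' with h | h | h
      · exact IH j' (by omega) (i'+2) h (by omega) h1
      · omega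
      · have hjj : j' = i' + 1 := by omega
        subst hjj
        exact hns (i'+1) (by omega) heq.symm
    · have h1 : alt f g u i' = alt f g u j' := by
        rw [← alt_pred_odd hf i' hei, ← alt_pred_odd hf j' hej, heq]
      exact IH j' (by omega) i' hij' (by omega) h1

lemma alt_inj (hf : ∀ v, f (f v) = v) (hg : ∀ v, g (g v) = v) (hfu : f u = u)
    {K : ℕ} (hns : ∀ k, k < K → alt f g u (k+1) ≠ alt f g u k) :
    ∀ i j, i ≤ K → j ≤ K → alt f g u i = alt f g u j → i = j := by
  intro i j hi hj heq
  rcases lt_trichotomy i j with h | h | h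
  · exact (alt_inj_aux hf hg hfu hns j i h hj heq).elim
  · exact h
  · exact (alt_inj_aux hf hg hfu hns i j h hi heq.symm).elim

lemma alt_stall [Fintype V] (hf : ∀ v, f (f v) = v) (hg : ∀ v, g (g v) = v)
    (hfu : f u = u) : ∃ T, alt f g u (T+1) = alt f g u T := by
  by_contra hc
  push_neg at hc
  have hns : ∀ k, k < Fintype.card V + 1 → alt f g u (k+1) ≠ alt f g u k :=
    fun k _ => hc k
  have hinj : Function.Injective
      (fun k : Fin (Fintype.card V + 1) => alt f g u k) := by
    intro a b hab
    exact Fin.ext (alt_inj hf hg hfu hns a b (by omega) (by omega) hab)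
  have := Fintype.card_le_of_injective _ hinj
  simp at this


def oset (f g : V → V) : Set V := {w | f w ≠ w ∧ g w = f w}

lemma endpoint [Fintype V] (hno : ¬ HasMatchingOfSize G (p+1))
    {f g : V → V} (hf : InvM G f) (hg : InvM G g)
    (hfc : (msupp f).ncard = 2*p) (hgc : (msupp g).ncard = 2*p)
    {u t : V} (huf : f u = u) (hug : g u ≠ u) (htg : g t = t)
    (hmax : ∀ g', InvM G g' → (msupp g').ncard = 2*p → g' t = t →
      (oset f g').ncard ≤ (oset f g).ncard) :
    ∃ T, 0 < T ∧ Even T ∧ alt f g u T = t ∧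
      ∀ k, k < T → alt f g u (k+1) ≠ alt f g u k := by
  classical
  have hex : ∃ T, alt f g u (T+1) = alt f g u T := alt_stall hf.1 hg.1 huf
  set T := Nat.find hex with hTdef
  have hstall : alt f g u (T+1) = alt f g u T := Nat.find_spec hex
  have hns : ∀ k, k < T → alt f g u (k+1) ≠ alt f g u k := fun k hk => Nat.find_min hex hk
  have hinj : ∀ i j, i ≤ T → j ≤ T → alt f g u i = alt f g u j → i = j :=
    alt_inj hf.1 hg.1 huf hns
  have hT1 : 1 ≤ T := by
    rcases Nat.eq_zero_or_pos T with h0 | h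
    · exfalso
      apply hug
      have := hstall
      rw [h0, alt_succ_even 0 Even.zero, alt_zero] at this
      exact this
    · exact h
  have hidx : ∀ k, k ≤ T → ∀ h : ∃ k', k' ≤ T ∧ alt f g u k' = alt f g u k,
      Nat.find h = k := by
    intro k hk h
    exact hinj _ k (Nat.find_spec h).1 hk (Nat.find_spec h).2
  have hparodd : ∀ k, ¬ Even k → Even (k-1) := by
    intro k hk
    rcases Nat.even_or_odd k with h | h
    · exact absurd h hk
    · obtain ⟨a, ha⟩ := h; exact ⟨a, by omega⟩
  have hpareven : ∀ k, Even k → 1 ≤ k → ¬ Even (k-1) := by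
    intro k hk h1 hc
    obtain ⟨a, ha⟩ := hk; obtain ⟨b, hb⟩ := hc; omega
  have hne2 : ∀ i j, i ≤ T → j ≤ T → i ≠ j → alt f g u i ≠ alt f g u j :=
    fun i j hi hj hne heq => hne (hinj i j hi hj heq)
  have hfstepE : ∀ k, 1 ≤ k → Even k → f (alt f g u k) = alt f g u (k-1) := by
    intro k h1 hek
    conv_lhs => rw [show k = (k-1)+1 by omega]
    rw [alt_succ_odd (k-1) (hpareven k hek h1), hf.1]
  have hfstepO : ∀ k, ¬ Even k → f (alt f g u k) = alt f g u (k+1) :=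
    fun k hek => (alt_succ_odd k hek).symm
  have hgstepE : ∀ k, Even k → g (alt f g u k) = alt f g u (k+1) :=
    fun k hek => (alt_succ_even k hek).symm
  have hgstepO : ∀ k, 1 ≤ k → ¬ Even k → g (alt f g u k) = alt f g u (k-1) := by
    intro k h1 hk
    conv_lhs => rw [show k = (k-1)+1 by omega]
    rw [alt_succ_even (k-1) (hparodd k hk), hg.1]
  by_cases hTe : Even T
  · by_cases hTt : alt f g u T = t
    · exact ⟨T, by omega, hTe, hTt, hns⟩
    · exfalso
      have hT2 : 2 ≤ T := by
        obtain ⟨a, ha⟩ := hTe; omega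
      set GF : V → V := fun w =>
        if h : ∃ k, k ≤ T ∧ alt f g u k = w then
          (if Nat.find h = 0 then w
           else if Even (Nat.find h) then alt f g u (Nat.find h - 1)
           else alt f g u (Nat.find h + 1))
        else g w with hGdef
      have hGval : ∀ k, k ≤ T → GF (alt f g u k) =
          (if k = 0 then alt f g u k
           else if Even k then alt f g u (k-1) else alt f g u (k+1)) := by
        intro k hk
        have hex2 : ∃ k', k' ≤ T ∧ alt f g u k' = alt f g u k := ⟨k, hk, rfl⟩
        rw [hGdef]
        simp only [dif_pos hex2, hidx k hk hex2]
      have hGoff : ∀ w, (¬ ∃ k, k ≤ T ∧ alt f g u k = w) → GF w = g w := by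
        intro w hw
        rw [hGdef]
        simp only [dif_neg hw]
      have hgT : g (alt f g u T) = alt f g u T := by
        rw [hgstepE T hTe]
        exact hstall
      have hgclosed : ∀ w, (¬ ∃ k, k ≤ T ∧ alt f g u k = w) →
          ¬ ∃ k, k ≤ T ∧ alt f g u k = g w := by
        intro w hw ⟨k, hk, hkw⟩
        apply hw
        have hwk : w = g (alt f g u k) := by rw [hkw, hg.1]
        by_cases hek : Even k
        · by_cases hkT : k = T
          · exact ⟨T, le_rfl, by rw [hwk, hkT, hgT]⟩
          · exact ⟨k+1, by omega, by rw [hwk, hgstepE k hek]⟩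
        · have h1 : 1 ≤ k := by
            rcases Nat.eq_zero_or_pos k with rfl | h
            · exact absurd Even.zero hek
            · exact h
          exact ⟨k-1, by omega, by rw [hwk, hgstepO k h1 hek]⟩
      have hG0 : GF (alt f g u 0) = alt f g u 0 := by
        rw [hGval 0 (by omega)]
        simp
      have hGinv : ∀ w, GF (GF w) = w := by
        intro w
        by_cases hon : ∃ k, k ≤ T ∧ alt f g u k = w
        · obtain ⟨k, hk, rfl⟩ := hon
          rcases Nat.eq_zero_or_pos k with rfl | hk1
          · rw [hG0, hG0]
          by_cases hek : Even k
          · have h0 : GF (alt f g u k) = alt f g u (k-1) := by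
              rw [hGval k hk]
              simp [show k ≠ 0 by omega, hek]
            have h1 : GF (alt f g u (k-1)) = alt f g u (k-1+1) := by
              rw [hGval (k-1) (by omega)]
              simp [show ¬ (k-1 = 0) by obtain ⟨a, ha⟩ := hek; omega,
                hpareven k hek hk1]
            rw [h0, h1, show k-1+1 = k by omega]
          · have h0 : GF (alt f g u k) = alt f g u (k+1) := by
              rw [hGval k hk]
              simp [show k ≠ 0 by omega, hek]
            have hkT : k < T := by
              have : k ≠ T := fun hc => hek (hc ▸ hTe)
              omega
            have h1 : GF (alt f g u (k+1)) = alt f g u (k+1-1) := by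
              rw [hGval (k+1) (by omega)]
              simp [Nat.even_add_one, hek]
            rw [h0, h1]
            simp
        · rw [hGoff w hon, hGoff (g w) (hgclosed w hon), hg.1]
      have hGadj : ∀ w, GF w ≠ w → G.Adj w (GF w) := by
        intro w hw
        by_cases hon : ∃ k, k ≤ T ∧ alt f g u k = w
        · obtain ⟨k, hk, rfl⟩ := hon
          rcases Nat.eq_zero_or_pos k with rfl | hk1
          · exact absurd hG0 hw
          by_cases hek : Even k
          · have h0 : GF (alt f g u k) = alt f g u (k-1) := by
              rw [hGval k hk]
              simp [show k ≠ 0 by omega, hek]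
            have hne : f (alt f g u (k-1)) ≠ alt f g u (k-1) := by
              rw [hfstepO (k-1) (hpareven k hek hk1)]
              exact hne2 (k-1+1) (k-1) (by omega) (by omega) (by omega)
            have hadj := (hf.2 _ hne).symm
            rw [hfstepO (k-1) (hpareven k hek hk1), show k-1+1 = k by omega] at hadj
            rw [h0]
            exact hadj
          · have hkT : k < T := by
              have : k ≠ T := fun hc => hek (hc ▸ hTe)
              omega
            have h0 : GF (alt f g u k) = alt f g u (k+1) := by
              rw [hGval k hk]
              simp [show k ≠ 0 by omega, hek]
            have hne : f (alt f g u k) ≠ alt f g u k := by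
              rw [hfstepO k hek]
              exact hns k hkT
            rw [h0, ← hfstepO k hek]
            exact hf.2 _ hne
        · rw [hGoff w hon] at hw ⊢
          exact hg.2 w hw
      have htoff : ¬ ∃ k, k ≤ T ∧ alt f g u k = t := by
        rintro ⟨k, hk, hkt⟩
        rcases Nat.eq_zero_or_pos k with rfl | hk1
        · rw [← hkt] at htg
          exact hug htg
        by_cases hkT : k = T
        · rw [hkT] at hkt
          exact hTt hkt
        by_cases hek : Even k
        · have hne : g (alt f g u k) ≠ alt f g u k := by
            rw [hgstepE k hek]
            exact hne2 (k+1) k (by omega) hk (by omega)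
          apply hne
          rw [hkt]
          exact htg
        · have hne : g (alt f g u k) ≠ alt f g u k := by
            rw [hgstepO k hk1 hek]
            exact hne2 (k-1) k (by omega) hk (by omega)
          apply hne
          rw [hkt]
          exact htg
      have hGt : GF t = t := by
        rw [hGoff t htoff]
        exact htg
      have hsupp : msupp GF = insert (alt f g u T) (msupp g \ {alt f g u 0}) := by
        ext w
        simp only [mem_msupp, Set.mem_insert_iff, Set.mem_diff, Set.mem_singleton_iff]
        constructor
        · intro hw
          by_cases hon : ∃ k, k ≤ T ∧ alt f g u k = w
          · obtain ⟨k, hk, rfl⟩ := hon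
            rcases Nat.eq_zero_or_pos k with rfl | hk1
            · exact absurd hG0 hw
            by_cases hkT : k = T
            · exact Or.inl (by rw [hkT])
            refine Or.inr ⟨?_, ?_⟩
            · by_cases hek : Even k
              · rw [hgstepE k hek]
                exact hne2 (k+1) k (by omega) hk (by omega)
              · rw [hgstepO k hk1 hek]
                exact hne2 (k-1) k (by omega) hk (by omega)
            · exact hne2 k 0 hk (by omega) (by omega)
          · rw [hGoff w hon] at hw
            refine Or.inr ⟨hw, ?_⟩
            intro hc
            exact hon ⟨0, by omega, hc.symm⟩
        · intro hw
          rcases hw with h | ⟨hw1, hw2⟩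
          · have h0 : GF w = alt f g u (T-1) := by
              rw [h, hGval T le_rfl]
              simp [show T ≠ 0 by omega, hTe]
            rw [h0, h]
            exact hne2 (T-1) T (by omega) le_rfl (by omega)
          · by_cases hon : ∃ k, k ≤ T ∧ alt f g u k = w
            · obtain ⟨k, hk, rfl⟩ := hon
              rcases Nat.eq_zero_or_pos k with rfl | hk1
              · exact absurd rfl hw2
              by_cases hek : Even k
              · have h0 : GF (alt f g u k) = alt f g u (k-1) := by
                  rw [hGval k hk]
                  simp [show k ≠ 0 by omega, hek]
                rw [h0]
                exact hne2 (k-1) k (by omega) hk (by omega)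
              · have hkT : k < T := by
                  have : k ≠ T := fun hc => hek (hc ▸ hTe)
                  omega
                have h0 : GF (alt f g u k) = alt f g u (k+1) := by
                  rw [hGval k hk]
                  simp [show k ≠ 0 by omega, hek]
                rw [h0]
                exact hne2 (k+1) k (by omega) hk (by omega)
            · rw [hGoff w hon]
              exact hw1
      have hGcard : (msupp GF).ncard = 2*p := by
        rw [hsupp]
        have h2 : alt f g u T ∉ (msupp g \ {alt f g u 0}) := by
          simp only [Set.mem_diff, mem_msupp, Set.mem_singleton_iff]
          intro hc
          exact hc.1 hgT
        have h3 : alt f g u 0 ∈ msupp g := hug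
        have h5 : 0 < (msupp g).ncard := (Set.ncard_pos (Set.toFinite _)).mpr ⟨u, hug⟩
        rw [Set.ncard_insert_of_notMem h2, Set.ncard_diff_singleton_of_mem h3, hgc]
        rw [hgc] at h5
        omega
      have hle := hmax GF ⟨hGinv, hGadj⟩ hGcard hGt
      have hoffpath : ∀ w ∈ oset f g, ¬ ∃ k, k ≤ T ∧ alt f g u k = w := by
        rintro w ⟨hw1, hw2⟩ ⟨k, hk, rfl⟩
        rcases Nat.eq_zero_or_pos k with rfl | hk1
        · exact hw1 huf
        by_cases hkT : k = T
        · apply hw1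
          rw [← hw2, hkT]
          exact hgT
        by_cases hek : Even k
        · have h6 := hw2
          rw [hgstepE k hek, hfstepE k hk1 hek] at h6
          exact absurd (hinj (k+1) (k-1) (by omega) (by omega) h6) (by omega)
        · have h6 := hw2
          rw [hgstepO k hk1 hek, hfstepO k hek] at h6
          exact absurd (hinj (k-1) (k+1) (by omega) (by omega) h6) (by omega)
      have hodd1 : ¬ Even 1 := by decide
      have hsub : insert (alt f g u 1) (oset f g) ⊆ oset f GF := by
        intro w hw
        rcases Set.mem_insert_iff.mp hw with h | hw
        · subst h
          constructor
          · rw [hfstepO 1 hodd1]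
            exact hne2 (1+1) 1 (by omega) (by omega) (by omega)
          · have h0 : GF (alt f g u 1) = alt f g u (1+1) := by
              rw [hGval 1 (by omega)]
              simp
            rw [h0, hfstepO 1 hodd1]
        · exact ⟨hw.1, by rw [hGoff w (hoffpath w hw)]; exact hw.2⟩
      have hnotin : alt f g u 1 ∉ oset f g := by
        rintro ⟨h1, h2⟩
        rw [hgstepO 1 le_rfl hodd1, hfstepO 1 hodd1] at h2
        exact absurd (hinj (1-1) (1+1) (by omega) (by omega) h2) (by omega)
      have hcard1 : (oset f g).ncard + 1 ≤ (oset f GF).ncard := by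
        have h7 := Set.ncard_insert_of_notMem hnotin (Set.toFinite _)
        calc (oset f g).ncard + 1 = (insert (alt f g u 1) (oset f g)).ncard := h7.symm
          _ ≤ (oset f GF).ncard := Set.ncard_le_ncard hsub (Set.toFinite _)
      omega
  · -- T odd : augmenting path, contradiction with hno
    exfalso
    apply hno
    rw [hasM_iff]
    set F : V → V := fun w =>
      if h : ∃ k, k ≤ T ∧ alt f g u k = w then
        (if Even (Nat.find h) then alt f g u (Nat.find h + 1)
         else alt f g u (Nat.find h - 1))
      else f w with hFdef
    have hFval : ∀ k, k ≤ T → F (alt f g u k) =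
        (if Even k then alt f g u (k+1) else alt f g u (k-1)) := by
      intro k hk
      have hex2 : ∃ k', k' ≤ T ∧ alt f g u k' = alt f g u k := ⟨k, hk, rfl⟩
      rw [hFdef]
      simp only [dif_pos hex2, hidx k hk hex2]
    have hFoff : ∀ w, (¬ ∃ k, k ≤ T ∧ alt f g u k = w) → F w = f w := by
      intro w hw
      rw [hFdef]
      simp only [dif_neg hw]
    have hfclosed : ∀ w, (¬ ∃ k, k ≤ T ∧ alt f g u k = w) →
        ¬ ∃ k, k ≤ T ∧ alt f g u k = f w := by
      intro w hw ⟨k, hk, hkw⟩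
      apply hw
      have hwk : w = f (alt f g u k) := by rw [hkw, hf.1]
      by_cases hek : Even k
      · rcases Nat.eq_zero_or_pos k with rfl | hkpos
        · refine ⟨0, by omega, ?_⟩
          rw [hwk, alt_zero, huf]
        · have hodd : ¬ Even (k-1) := by
            intro hc; rcases hek with ⟨a, ha⟩; rcases hc with ⟨b, hb⟩; omega
          have h2 : f (alt f g u k) = alt f g u (k-1) := by
            conv_lhs => rw [show k = (k-1)+1 by omega]
            rw [alt_succ_odd (k-1) hodd, hf.1]
          refine ⟨k-1, by omega, ?_⟩
          rw [hwk, h2]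
      · by_cases hkT : k = T
        · refine ⟨T, le_refl T, ?_⟩
          have h2 : f (alt f g u T) = alt f g u T := by
            rw [← alt_succ_odd (f := f) (g := g) (u := u) T hTe]
            exact hstall
          rw [hwk, hkT, h2]
        · refine ⟨k+1, by omega, ?_⟩
          rw [hwk]
          exact alt_succ_odd k hek
    have hfT : f (alt f g u T) = alt f g u T := by
      rw [← alt_succ_odd (f := f) (g := g) (u := u) T hTe]
      exact hstall
    have hFinv : ∀ w, F (F w) = w := by
      intro w
      by_cases hon : ∃ k, k ≤ T ∧ alt f g u k = w
      · obtain ⟨k, hk, rfl⟩ := hon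
        by_cases hek : Even k
        · have hkT : k < T := by
            have : k ≠ T := fun h => hTe (h ▸ hek)
            omega
          rw [hFval k hk, if_pos hek,
            hFval (k+1) (by omega), if_neg (by simp [Nat.even_add_one, hek])]
          simp
        · have h1 : 1 ≤ k := by
            rcases Nat.eq_zero_or_pos k with rfl | h
            · exact absurd Even.zero hek
            · exact h
          rw [hFval k hk, if_neg hek,
            hFval (k-1) (by omega), if_pos (hparodd k hek)]
          congr 1
          omega
      · rw [hFoff w hon, hFoff (f w) (hfclosed w hon), hf.1]
    have hFadj : ∀ w, F w ≠ w → G.Adj w (F w) := by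
      intro w hw
      by_cases hon : ∃ k, k ≤ T ∧ alt f g u k = w
      · obtain ⟨k, hk, rfl⟩ := hon
        by_cases hek : Even k
        · have hkT : k < T := by
            have : k ≠ T := fun h => hTe (h ▸ hek)
            omega
          have hne : g (alt f g u k) ≠ alt f g u k := by
            rw [hgstepE k hek]
            exact hns k hkT
          rw [hFval k hk, if_pos hek, ← hgstepE k hek]
          exact hg.2 _ hne
        · have h1 : 1 ≤ k := by
            rcases Nat.eq_zero_or_pos k with rfl | h
            · exact absurd Even.zero hek
            · exact h
          have hne : g (alt f g u (k-1)) ≠ alt f g u (k-1) := by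
            rw [hgstepE (k-1) (hparodd k hek)]
            exact hne2 (k-1+1) (k-1) (by omega) (by omega) (by omega)
          have hadj := (hg.2 _ hne).symm
          rw [hgstepE (k-1) (hparodd k hek), show k-1+1 = k by omega] at hadj
          rw [hFval k hk, if_neg hek]
          exact hadj
      · rw [hFoff w hon] at hw ⊢
        exact hf.2 w hw
    have hsupp : msupp F = insert (alt f g u 0) (insert (alt f g u T) (msupp f)) := by
      ext w
      simp only [mem_msupp, Set.mem_insert_iff]
      constructor
      · intro hw
        by_cases hon : ∃ k, k ≤ T ∧ alt f g u k = w
        · obtain ⟨k, hk, rfl⟩ := hon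
          rcases Nat.eq_zero_or_pos k with rfl | hk1
          · exact Or.inl rfl
          by_cases hkT : k = T
          · exact Or.inr (Or.inl (by rw [hkT]))
          refine Or.inr (Or.inr ?_)
          by_cases hek : Even k
          · rw [hfstepE k hk1 hek]
            exact hne2 (k-1) k (by omega) hk (by omega)
          · rw [hfstepO k hek]
            exact hne2 (k+1) k (by omega) hk (by omega)
        · rw [hFoff w hon] at hw
          exact Or.inr (Or.inr hw)
      · intro hw
        rcases hw with h | h | hw
        · have h0 : F w = alt f g u 1 := by
            rw [h, hFval 0 (by omega), if_pos Even.zero]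
          rw [h0, h]
          exact hne2 1 0 hT1 (by omega) (by omega)
        · have h0 : F w = alt f g u (T-1) := by
            rw [h, hFval T le_rfl, if_neg hTe]
          rw [h0, h]
          exact hne2 (T-1) T (by omega) le_rfl (by omega)
        · by_cases hon : ∃ k, k ≤ T ∧ alt f g u k = w
          · obtain ⟨k, hk, rfl⟩ := hon
            rcases Nat.eq_zero_or_pos k with rfl | hk1
            · exact absurd huf hw
            by_cases hkT : k = T
            · rw [hkT] at hw
              exact absurd hfT hw
            by_cases hek : Even k
            · rw [hFval k hk, if_pos hek]
              exact hne2 (k+1) k (by omega) hk (by omega)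
            · rw [hFval k hk, if_neg hek]
              exact hne2 (k-1) k (by omega) hk (by omega)
          · rw [hFoff w hon]
            exact hw
    refine ⟨F, ⟨hFinv, hFadj⟩, ?_⟩
    rw [hsupp]
    have h1 : alt f g u 0 ∉ insert (alt f g u T) (msupp f) := by
      simp only [Set.mem_insert_iff, mem_msupp]
      push_neg
      refine ⟨hne2 0 T (by omega) le_rfl (by omega), ?_⟩
      exact huf
    have h2 : alt f g u T ∉ msupp f := by
      simp only [mem_msupp]
      push_neg
      exact hfT
    rw [Set.ncard_insert_of_notMem h1, Set.ncard_insert_of_notMem h2, hfc]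
    ring


lemma rev_half {f g : V → V} (hf : ∀ x, f (f x) = x) (hg : ∀ x, g (g x) = x)
    {u v t : V} {T T' : ℕ} (hTE : Even T) (hTE' : Even T')
    (hT0 : 0 < T) (hT0' : 0 < T')
    (hu : alt f g u T = t) (hv : alt f g v T' = t)
    (hnsv : ∀ k, k < T' → alt f g v (k+1) ≠ alt f g v k)
    (hfu : f u = u) (hle : T ≤ T') : u = v := by
  have hsync : ∀ k, k ≤ T → k ≤ T' → alt f g u (T - k) = alt f g v (T' - k) := by
    intro k
    induction k with
    | zero =>
      intro _ _
      simpa using hu.trans hv.symm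
    | succ k IH =>
      intro hk hk'
      have h1 := IH (by omega) (by omega)
      by_cases hei : Even (T - (k+1))
      · have hei' : Even (T' - (k+1)) := by
          rw [Nat.even_iff] at hTE hTE' hei ⊢
          omega
        have e1 : alt f g u (T-k) = g (alt f g u (T-(k+1))) := by
          rw [show T-k = (T-(k+1))+1 by omega]
          exact alt_succ_even _ hei
        have e2 : alt f g v (T'-k) = g (alt f g v (T'-(k+1))) := by
          rw [show T'-k = (T'-(k+1))+1 by omega]
          exact alt_succ_even _ hei'
        have h2 := congrArg g h1
        rw [e1, e2, hg, hg] at h2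
        exact h2
      · have hei' : ¬ Even (T' - (k+1)) := by
          rw [Nat.even_iff] at hTE hTE' hei ⊢
          omega
        have e1 : alt f g u (T-k) = f (alt f g u (T-(k+1))) := by
          rw [show T-k = (T-(k+1))+1 by omega]
          exact alt_succ_odd _ hei
        have e2 : alt f g v (T'-k) = f (alt f g v (T'-(k+1))) := by
          rw [show T'-k = (T'-(k+1))+1 by omega]
          exact alt_succ_odd _ hei'
        have h2 := congrArg f h1
        rw [e1, e2, hf, hf] at h2
        exact h2
  have hfin := hsync T le_rfl hle
  rw [Nat.sub_self] at hfin
  by_cases hTT : T' = T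
  · rw [hTT, Nat.sub_self] at hfin
    exact hfin
  · exfalso
    set j := T' - T with hjdef
    have hj0 : 0 < j := by omega
    have hjT : j < T' := by omega
    have hjE : Even j := by
      rw [Nat.even_iff] at hTE hTE' ⊢
      omega
    have hjodd : ¬ Even (j - 1) := by
      rw [Nat.even_iff] at hjE ⊢
      omega
    have hu2 : u = alt f g v j := hfin
    have hfc : f (alt f g v j) = alt f g v (j-1) := by
      conv_lhs => rw [show j = (j-1)+1 by omega]
      rw [alt_succ_odd (j-1) hjodd, hf]
    have h8 : f (alt f g v j) = alt f g v j := by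
      rw [← hu2, hfu]
    rw [hfc] at h8
    have h9 := hnsv (j-1) (by omega)
    rw [show j-1+1 = j by omega] at h9
    exact h9 h8.symm

lemma rev_eq {f g : V → V} (hf : ∀ x, f (f x) = x) (hg : ∀ x, g (g x) = x)
    {u v t : V} {T T' : ℕ} (hTE : Even T) (hTE' : Even T')
    (hT0 : 0 < T) (hT0' : 0 < T')
    (hu : alt f g u T = t) (hv : alt f g v T' = t)
    (hnsu : ∀ k, k < T → alt f g u (k+1) ≠ alt f g u k)
    (hnsv : ∀ k, k < T' → alt f g v (k+1) ≠ alt f g v k)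
    (hfu : f u = u) (hfv : f v = v) : u = v := by
  rcases le_total T T' with h | h
  · exact rev_half hf hg hTE hTE' hT0 hT0' hu hv hnsv hfu h
  · exact (rev_half hf hg hTE' hTE hT0' hT0 hv hu hnsu hfv h).symm

lemma key [Fintype V] [Nonempty V] (hsat : MatchingSaturated G (p+1))
    (hdisc : ¬ G.Connected) :
    ∀ (f : V → V) (u v : V), InvM G f → (msupp f).ncard = 2*p → f u = u → f v = v →
      u ≠ v → ¬ G.Reachable u v := by
  classical
  have hno : ¬ HasMatchingOfSize G (p+1) := hsat.1
  have hz : ∀ x : V, ∃ z, ¬ G.Reachable x z := by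
    intro x
    by_contra hc
    push_neg at hc
    apply hdisc
    rw [connected_iff]
    exact ⟨fun a b => (hc a).symm.trans (hc b), ‹Nonempty V›⟩
  have hexpose : ∀ x : V, ∃ g, InvM G g ∧ (msupp g).ncard = 2*p ∧ g x = x := by
    intro x
    obtain ⟨z, hz'⟩ := hz x
    have hne : x ≠ z := fun h => hz' (h ▸ Reachable.refl x)
    have hnadj : ¬ G.Adj x z := fun h => hz' h.reachable
    obtain ⟨g, h1, h2, h3, h4⟩ := exists_exposed_pair hsat hne hnadj
    exact ⟨g, h1, h2, h3⟩
  by_contra hc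
  push_neg at hc
  obtain ⟨f0, u0, v0, hf0, hc0, hu0, hv0, hne0, hreach0⟩ := hc
  have hPex : ∃ d, ∃ f, ∃ u, ∃ v, InvM G f ∧ (msupp f).ncard = 2*p ∧ f u = u ∧
      f v = v ∧ u ≠ v ∧ G.Reachable u v ∧ G.dist u v = d :=
    ⟨G.dist u0 v0, f0, u0, v0, hf0, hc0, hu0, hv0, hne0, hreach0, rfl⟩
  obtain ⟨f, u, v, hf, hfc, hfu, hfv, hne, hreach, hdist⟩ := Nat.find_spec hPex
  set d0 := Nat.find hPex with hd0def
  have hmin : ∀ d', d' < d0 → ¬ (∃ f, ∃ u, ∃ v, InvM G f ∧ (msupp f).ncard = 2*p ∧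
      f u = u ∧ f v = v ∧ u ≠ v ∧ G.Reachable u v ∧ G.dist u v = d') :=
    fun d' hd' => Nat.find_min hPex hd'
  have hnadj : ¬ G.Adj u v := no_adj_exposed hno hf hfc hfu hfv hne
  have hd2 : 2 ≤ d0 := by
    have h0 : G.dist u v ≠ 0 := dist_ne_zero_iff_ne_and_reachable.mpr ⟨hne, hreach⟩
    have h1 : G.dist u v ≠ 1 := fun hcc => hnadj (dist_eq_one_iff_adj.mp hcc)
    omega
  obtain ⟨W, hW⟩ := hreach.exists_walk_length_eq_dist
  cases W with
  | nil =>
    exact absurd rfl hne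
  | @cons _ t _ hadj W' =>
    rw [Walk.length_cons, hdist] at hW
    have hreach_tv : G.Reachable t v := ⟨W'⟩
    have hdist_tv : G.dist t v ≤ d0 - 1 := by
      have := SimpleGraph.dist_le W'
      omega
    have htv : t ≠ v := by
      intro hcc
      subst hcc
      exact hnadj hadj
    have htf : f t ≠ t := by
      intro hcc
      exact (no_adj_exposed hno hf hfc hfu hcc hadj.ne) hadj
    have hbdd : ∀ g' : V → V, (oset f g').ncard ≤ Fintype.card V := by
      intro g'
      calc (oset f g').ncard ≤ (Set.univ : Set V).ncard :=
            Set.ncard_le_ncard (Set.subset_univ _) (Set.toFinite _)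
        _ = Fintype.card V := by rw [Set.ncard_univ, Nat.card_eq_fintype_card]
    set S : Set ℕ :=
      {m | ∃ g, (InvM G g ∧ (msupp g).ncard = 2*p ∧ g t = t) ∧ (oset f g).ncard = m}
      with hSdef
    have hSne : S.Nonempty := by
      obtain ⟨g, h1, h2, h3⟩ := hexpose t
      exact ⟨_, g, ⟨h1, h2, h3⟩, rfl⟩
    have hSbdd : BddAbove S := by
      refine ⟨Fintype.card V, ?_⟩
      rintro m ⟨g, -, rfl⟩
      exact hbdd g
    obtain ⟨g, ⟨hg, hgc, hgt⟩, hgov⟩ := Nat.sSup_mem hSne hSbdd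
    have hmax : ∀ g', InvM G g' → (msupp g').ncard = 2*p → g' t = t →
        (oset f g').ncard ≤ (oset f g).ncard := by
      intro g' h1 h2 h3
      rw [hgov]
      exact le_csSup hSbdd ⟨g', ⟨h1, h2, h3⟩, rfl⟩
    have hgu : g u ≠ u := by
      intro hcc
      exact (no_adj_exposed hno hg hgc hcc hgt hadj.ne) hadj
    have hgv : g v ≠ v := by
      intro hcc
      have hlt : G.dist t v < d0 := by omega
      exact hmin (G.dist t v) hlt ⟨g, t, v, hg, hgc, hgt, hcc, htv, hreach_tv, rfl⟩
    obtain ⟨T, hT0, hTE, hTt, hTns⟩ := endpoint hno hf hg hfc hgc hfu hgu hgt hmax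
    obtain ⟨T', hT0', hTE', hTt', hTns'⟩ := endpoint hno hf hg hfc hgc hfv hgv hgt hmax
    exact hne (rev_eq hf.1 hg.1 hTE hTE' hT0 hT0' hTt hTt' hTns hTns' hfu hfv)

end MatchSatAux


theorem stmt_0 {V : Type*} [Fintype V] (G : SimpleGraph V) (n p : ℕ)
    (hn : Fintype.card V = n)
    (hsat : MatchingSaturated G (p + 1))
    (hdisc : ¬ G.Connected) :
    ∀ c : G.ConnectedComponent,
      (∀ u ∈ c.supp, ∀ v ∈ c.supp, u ≠ v → G.Adj u v) ∧
      Odd c.supp.ncard := by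
  classical
  intro c
  obtain ⟨w, hw⟩ := c.exists_rep
  haveI : Nonempty V := ⟨w⟩
  have KEY := MatchSatAux.key (p := p) hsat hdisc
  have hcomp : ∀ u ∈ c.supp, ∀ v ∈ c.supp, u ≠ v → G.Adj u v := by
    intro u hu v hv hne
    by_contra hnadj
    obtain ⟨f, h1, h2, h3, h4⟩ := MatchSatAux.exists_exposed_pair hsat hne hnadj
    have hreach : G.Reachable u v := by
      rw [ConnectedComponent.mem_supp_iff] at hu hv
      exact ConnectedComponent.exact (hu.trans hv.symm)
    exact KEY f u v h1 h2 h3 h4 hne hreach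
  refine ⟨hcomp, ?_⟩
  have hz : ∃ z, ¬ G.Reachable w z := by
    by_contra hcc
    push_neg at hcc
    apply hdisc
    rw [connected_iff]
    exact ⟨fun a b => (hcc a).symm.trans (hcc b), ⟨w⟩⟩
  obtain ⟨z, hz'⟩ := hz
  have hnew : w ≠ z := fun h => hz' (h ▸ Reachable.refl w)
  have hnadjw : ¬ G.Adj w z := fun h => hz' h.reachable
  obtain ⟨g, hg, hgc, hgw, -⟩ := MatchSatAux.exists_exposed_pair hsat hnew hnadjw
  set M := MatchSatAux.invToSub G g hg with hM
  have hMm : M.IsMatching := MatchSatAux.invToSub_isMatching G g hg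
  have hMverts : M.verts = MatchSatAux.msupp g := rfl
  have hinter : M.verts ∩ c.supp = c.supp \ {w} := by
    rw [hMverts]
    ext x
    simp only [Set.mem_inter_iff, Set.mem_diff, Set.mem_singleton_iff,
      MatchSatAux.mem_msupp]
    constructor
    · rintro ⟨hx1, hx2⟩
      refine ⟨hx2, ?_⟩
      intro hcc
      subst hcc
      exact hx1 hgw
    · rintro ⟨hx1, hx2⟩
      refine ⟨?_, hx1⟩
      intro hgx
      have hreach : G.Reachable w x := by
        rw [ConnectedComponent.mem_supp_iff] at hx1
        exact ConnectedComponent.exact (hw.trans hx1.symm)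
      exact KEY g w x hg hgc hgw hgx (Ne.symm hx2) hreach
  have hmatch2 := hMm.induce_connectedComponent c
  rw [hinter] at hmatch2
  have heven : Even ((c.supp \ {w}) : Set V).ncard := by
    haveI : Fintype ((M.induce (c.supp \ {w})).verts) := Fintype.ofFinite _
    have h5 := hmatch2.even_card
    rwa [← Set.ncard_eq_toFinset_card'] at h5
  have hwsupp : w ∈ c.supp := by
    rw [ConnectedComponent.mem_supp_iff]
    exact hw
  have hfinal := Set.ncard_diff_singleton_of_mem hwsupp
  have hpos : 0 < c.supp.ncard := (Set.ncard_pos (Set.toFinite _)).mpr ⟨w, hwsupp⟩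
  obtain ⟨m, hm⟩ := heven
  exact ⟨m, by omega⟩
end

section
/- Let G be a graph on n vertices with a set Z of z universal vertices such that G - Z is a disjoint union of k + z complete graphs of odd orders 2p_1+1, …, 2p_{k+z}+1, where Σ p_i = (n-k)/2 - z and all p_i ≥ 0. Then Σ_{v∈V(G)} d(v) ≤ 3z² + (4k - 2n - 3)z + (n² - 2kn + k² + n - k); consequently, if n > 5k - 6 then |E(G)| ≤ (n-k)(n-k+1)/2, and if n ≤ 5k - 6 then |E(G)| ≤ (n-k)(3n+k-2)/8. -/
open SimpleGraph

theorem stmt_19 {V : Type*} [Fintype V] [DecidableEq V]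
    (G : SimpleGraph V) [DecidableRel G.Adj]
    (n k z : ℕ) (Z : Set V)
    {ι : Type*} [Fintype ι] (C : ι → Set V) (p : ι → ℕ)
    (hn : Fintype.card V = n) (hz : Z.ncard = z)
    (hZuniv : ∀ v ∈ Z, ∀ w : V, w ≠ v → G.Adj v w)
    (hCsub : ∀ i, C i ⊆ Zᶜ)
    (hCcover : ∀ v ∈ (Zᶜ : Set V), ∃ i, v ∈ C i)
    (hCdisj : ∀ i j, i ≠ j → Disjoint (C i) (C j))
    (hclique : ∀ i, ∀ u ∈ C i, ∀ w ∈ C i, u ≠ w → G.Adj u w)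
    (hsep : ∀ i j, i ≠ j → ∀ u ∈ C i, ∀ w ∈ C j, ¬ G.Adj u w)
    (hcard : ∀ i, (C i).ncard = 2 * p i + 1)
    (hι : Fintype.card ι = k + z)
    (hcount : n = z + ∑ i, (2 * p i + 1))
    (hsum : 2 * (∑ i, p i + z) + k = n) :
    ((∑ v : V, G.degree v : ℤ) ≤
      3 * (z : ℤ) ^ 2 + (4 * k - 2 * n - 3) * z +
        ((n : ℤ) ^ 2 - 2 * k * n + k ^ 2 + n - k)) ∧
    ((n : ℤ) > 5 * k - 6 →
      2 * (G.edgeFinset.card : ℤ) ≤ ((n : ℤ) - k) * ((n : ℤ) - k + 1)) ∧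
    ((n : ℤ) ≤ 5 * k - 6 →
      8 * (G.edgeFinset.card : ℤ) ≤ ((n : ℤ) - k) * (3 * (n : ℤ) + k - 2)) := by
  classical
  have hZFcard : Z.toFinset.card = z := by
    rw [← hz, Set.ncard_eq_toFinset_card']
  have hCFcard : ∀ i, (C i).toFinset.card = 2 * p i + 1 := fun i => by
    rw [← Set.ncard_eq_toFinset_card']; exact hcard i
  -- degree of a universal vertex
  have hdegZ : ∀ v ∈ Z, (G.degree v : ℤ) = (n : ℤ) - 1 := by
    intro v hv
    have hne : G.neighborFinset v = Finset.univ.erase v := by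
      ext w
      simp only [mem_neighborFinset, Finset.mem_erase, Finset.mem_univ, and_true]
      exact ⟨fun h => h.ne', fun h => hZuniv v hv w h⟩
    have hn1 : 1 ≤ n := by
      rw [← hn]; exact Fintype.card_pos_iff.mpr ⟨v⟩
    rw [SimpleGraph.degree, hne, Finset.card_erase_of_mem (Finset.mem_univ v),
      Finset.card_univ, hn]
    push_cast [hn1]
    ring
  -- degree of a clique vertex
  have hdegC : ∀ i, ∀ v ∈ C i, (G.degree v : ℤ) = 2 * p i + z := by
    intro i v hv
    have hne : G.neighborFinset v = Z.toFinset ∪ ((C i).toFinset.erase v) := by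
      ext w
      simp only [mem_neighborFinset, Finset.mem_union, Finset.mem_erase, Set.mem_toFinset]
      constructor
      · intro h
        by_cases hw : w ∈ Z
        · exact Or.inl hw
        · obtain ⟨j, hj⟩ := hCcover w hw
          rcases eq_or_ne j i with rfl | hji
          · exact Or.inr ⟨h.ne', hj⟩
          · exact absurd h.symm (hsep j i hji w hj v hv)
      · rintro (hw | ⟨hwv, hw⟩)
        · exact (hZuniv w hw v (fun h => hCsub i hv (h ▸ hw))).symm
        · exact hclique i v hv w hw hwv.symm
    have hdisj : Disjoint Z.toFinset ((C i).toFinset.erase v) := by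
      rw [Finset.disjoint_left]
      intro a ha ha'
      exact hCsub i (Set.mem_toFinset.mp (Finset.mem_of_mem_erase ha')) (Set.mem_toFinset.mp ha)
    rw [SimpleGraph.degree, hne, Finset.card_union_of_disjoint hdisj, hZFcard,
      Finset.card_erase_of_mem (Set.mem_toFinset.mpr hv), hCFcard i]
    push_cast
    ring
  -- the complement of Z is the union of the cliques
  have hcomplEq : (Z.toFinset)ᶜ = Finset.univ.biUnion (fun i => (C i).toFinset) := by
    ext w
    simp only [Finset.mem_compl, Set.mem_toFinset, Finset.mem_biUnion, Finset.mem_univ,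
      true_and]
    constructor
    · intro hw; exact hCcover w hw
    · rintro ⟨i, hi⟩; exact hCsub i hi
  have hdisjF : ((Finset.univ : Finset ι) : Set ι).PairwiseDisjoint (fun i => (C i).toFinset) := by
    intro i _ j _ hij
    simpa [Function.onFun, Set.disjoint_toFinset] using hCdisj i j hij
  -- total degree sum
  have key : (∑ v : V, (G.degree v : ℤ)) =
      z * ((n : ℤ) - 1) + ∑ i, ((2 * (p i : ℤ) + 1) * (2 * p i + z)) := by
    rw [← Finset.sum_add_sum_compl Z.toFinset]
    congr 1
    · rw [Finset.sum_congr rfl (fun v hv => hdegZ v (Set.mem_toFinset.mp hv)),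
        Finset.sum_const, hZFcard, nsmul_eq_mul]
    · rw [hcomplEq, Finset.sum_biUnion hdisjF]
      apply Finset.sum_congr rfl
      intro i _
      rw [Finset.sum_congr rfl (fun v hv => hdegC i v (Set.mem_toFinset.mp hv)),
        Finset.sum_const, hCFcard i, nsmul_eq_mul]
      push_cast
      ring
  set P : ℤ := ∑ i, (p i : ℤ) with hP
  set Q : ℤ := ∑ i, (p i : ℤ) ^ 2 with hQ
  have hPnn : 0 ≤ P := Finset.sum_nonneg fun i _ => by positivity
  have hsq : Q ≤ P ^ 2 := by
    have h1 : ∀ i ∈ (Finset.univ : Finset ι), (p i : ℤ) ^ 2 ≤ (p i : ℤ) * P := by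
      intro i _
      have h2 : (p i : ℤ) ≤ P := by
        rw [hP]
        exact Finset.single_le_sum (f := fun j => (p j : ℤ))
          (fun j _ => by positivity) (Finset.mem_univ i)
      nlinarith [Int.ofNat_nonneg (p i)]
    calc Q ≤ ∑ i, (p i : ℤ) * P := Finset.sum_le_sum h1
      _ = P ^ 2 := by rw [← Finset.sum_mul]; ring
  have hexp : ∑ i, ((2 * (p i : ℤ) + 1) * (2 * p i + z)) =
      4 * Q + (2 * z + 2) * P + ((k : ℤ) + z) * z := by
    calc ∑ i, ((2 * (p i : ℤ) + 1) * (2 * p i + z))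
        = ∑ i, (4 * (p i : ℤ) ^ 2 + (2 * z + 2) * (p i) + z) :=
          Finset.sum_congr rfl (fun i _ => by ring)
      _ = 4 * Q + (2 * z + 2) * P + (Fintype.card ι : ℤ) * z := by
          rw [Finset.sum_add_distrib, Finset.sum_add_distrib, ← Finset.mul_sum,
            ← Finset.mul_sum, Finset.sum_const, Finset.card_univ, nsmul_eq_mul]
      _ = 4 * Q + (2 * z + 2) * P + ((k : ℤ) + z) * z := by rw [hι]; push_cast; ring
  have hsum' : 2 * (P + z) + k = (n : ℤ) := by
    have := hsum
    push_cast [← this]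
    ring
  have part1 : (∑ v : V, (G.degree v : ℤ)) ≤
      3 * (z : ℤ) ^ 2 + (4 * k - 2 * n - 3) * z +
        ((n : ℤ) ^ 2 - 2 * k * n + k ^ 2 + n - k) := by
    rw [key, hexp]
    have h4 : (z : ℤ) * ((n : ℤ) - 1) + (4 * Q + (2 * z + 2) * P + ((k : ℤ) + z) * z) ≤
        (z : ℤ) * ((n : ℤ) - 1) + (4 * P ^ 2 + (2 * z + 2) * P + ((k : ℤ) + z) * z) := by
      linarith
    refine le_trans h4 (le_of_eq ?_)
    linear_combination ((n : ℤ) + 2 * P - z - k + 1) * hsum'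
  have h2E : (∑ v : V, (G.degree v : ℤ)) = 2 * (G.edgeFinset.card : ℤ) := by
    exact_mod_cast congrArg (Nat.cast : ℕ → ℤ) (G.sum_degrees_eq_twice_card_edges)
  have hz0 : (0 : ℤ) ≤ z := Int.ofNat_nonneg z
  have hzle : 2 * (z : ℤ) + k ≤ n := by linarith
  refine ⟨part1, ?_, ?_⟩
  · intro hgt
    have h3z : 3 * (z : ℤ) ≤ 2 * n - 4 * k + 3 := by linarith
    have hprod : (0 : ℤ) ≤ z * (2 * n - 4 * k + 3 - 3 * z) :=
      mul_nonneg hz0 (by linarith)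
    linarith [part1, h2E, hprod]
  · intro hle
    have hm : (0 : ℤ) ≤ (n : ℤ) - k - 2 * z := by linarith
    have hp1 : (0 : ℤ) ≤ ((n : ℤ) - k - 2 * z) * (5 * k - 6 - n) :=
      mul_nonneg hm (by linarith)
    have hp2 : (0 : ℤ) ≤ (2 * (z : ℤ)) * ((n : ℤ) - k - 2 * z) :=
      mul_nonneg (by linarith) hm
    linarith [part1, h2E, hp1, hp2]
end
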